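/- arXiv:2511.07150 — 5 statements merged into one kernel-verified Lean document; each statement's English description precedes it below -/
import Mathlib

section
/- Let k ≥ 1 be an integer and r ∈ (0,1) with k·r ≥ 0.29. Let (X_t)_{t≥0} and (Y_t)_{t≥1} be integer-valued random processes with X_0 = 1, X_{t+1} = X_t + Y_{t+1}, and Y_{t+1} stochastically dominating Bin(k, min{r·X_t, 1}) conditional on the history up to time t. Then for any B ∈ [1, 1/r], the hitting time T = inf{t ≥ 0 : X_t ≥ B} satisfies E[T] ≤ 4·⌈log_{1+kr}(B)⌉. -/
open MeasureTheory
open scoped ENNReal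

/-!
Let `s = k r` and cut `[1, B)` into the `⌈log_{1+s} B⌉` phases
`[min(B, (1+s)^i), min(B, (1+s)^(i+1)))`. From a state `x` of phase `i`, `r x ≤ 1`, so a step
succeeds with probability at least `1/4` when `s x ≤ 1` (success: an increment `≥ 1`, which
alone ends the phase) and at least `1/2` when `s x > 1` (success: an increment `≥ s x / 2`, the
half-median of `Bin(k, r x)`; two such successes end the phase). Hence the potential of phase `i`,
with values `4`, `2`, `0`, drops in expectation by at least `1` at every step spent in the phase,
so the expected time spent in each phase is at most `4`, and `E[T] = ∑ₜ P(T > t)` is at most `4`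
times the number of phases.
-/

/-- Tail of the binomial distribution: `Pr[Bin(k,p) ≥ c]`. -/
noncomputable def binomTail (k : ℕ) (p : ℝ) (c : ℤ) : ℝ :=
  ∑ j ∈ Finset.range (k + 1),
    if c ≤ (j : ℤ) then (Nat.choose k j : ℝ) * p ^ j * (1 - p) ^ (k - j) else 0

open Finset Real

namespace MultiplicativeGrowth

lemma exp_neg_le_inv_of_pow_le {a : ℝ} {m n : ℕ} (ha : 0 < a) (hn : n ≠ 0)
    (h : a ^ n ≤ 2.7182818 ^ m) : exp (-(m / n)) ≤ a⁻¹ := by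
  rw [exp_neg, inv_le_inv₀ (exp_pos _) ha]
  refine le_of_pow_le_pow_left₀ hn (exp_pos _).le (h.trans ?_)
  rw [← exp_nat_mul, mul_div_cancel₀ _ (by exact_mod_cast hn), ← exp_one_pow]
  exact pow_le_pow_left₀ (by norm_num) (by linarith [exp_one_gt_d9]) m

lemma one_sub_pow_le_exp_neg_mul (k : ℕ) {p : ℝ} (hp : p ≤ 1) : (1 - p) ^ k ≤ exp (-(k * p)) := by
  rw [neg_mul_eq_mul_neg, exp_nat_mul]
  exact pow_le_pow_left₀ (by linarith) (one_sub_le_exp_neg p) k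

lemma one_add_half_sq_le_exp {z : ℝ} (hz : 0 ≤ z) : (1 + z / 2) ^ 2 ≤ exp z := by
  calc (1 + z / 2) ^ 2 ≤ exp (z / 2) ^ 2 := by gcongr; linarith [add_one_le_exp (z / 2)]
    _ = exp z := by rw [← exp_nat_mul]; ring_nf

lemma le_pow_natCeil_log_div_log {b B : ℝ} (hb : 1 < b) (hB : 1 ≤ B) :
    B ≤ b ^ ⌈log B / log b⌉₊ :=
  calc B = b ^ (log B / log b) := by
        rw [← Real.logb, Real.rpow_logb (by linarith) hb.ne' (by linarith)]
    _ ≤ b ^ (⌈log B / log b⌉₊ : ℝ) := Real.rpow_le_rpow_of_exponent_le hb.le (Nat.le_ceil _)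
    _ = b ^ ⌈log B / log b⌉₊ := Real.rpow_natCast _ _

lemma sum_range_choose_mul_pow_mul_pow (k : ℕ) (x y : ℝ) :
    ∑ j ∈ range (k + 1), (k.choose j : ℝ) * x ^ j * y ^ (k - j) = (x + y) ^ k := by
  rw [add_pow]
  exact sum_congr rfl fun j _ => by ring

lemma sum_range_choose_mul_pow_mul_one_sub_pow (k : ℕ) (p : ℝ) :
    ∑ j ∈ range (k + 1), (k.choose j : ℝ) * p ^ j * (1 - p) ^ (k - j) = 1 := by
  rw [sum_range_choose_mul_pow_mul_pow, add_sub_cancel, one_pow]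

noncomputable def lowTail (k : ℕ) (p : ℝ) (d : ℕ) : ℝ :=
  ∑ j ∈ range (k + 1), if j ≤ d then (k.choose j : ℝ) * p ^ j * (1 - p) ^ (k - j) else 0

lemma binomTail_add_lowTail (k d : ℕ) (p : ℝ) : binomTail k p (d + 1) + lowTail k p d = 1 := by
  rw [← sum_range_choose_mul_pow_mul_one_sub_pow k p, binomTail, lowTail, ← sum_add_distrib]
  refine sum_congr rfl fun j _ => ?_
  split_ifs <;> first | omega | ring

lemma binomTail_zero (k : ℕ) (p : ℝ) : binomTail k p 0 = 1 := by
  simpa [binomTail] using sum_range_choose_mul_pow_mul_one_sub_pow k p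

lemma lowTail_eq_sum_range {k d : ℕ} (hd : d ≤ k) (p : ℝ) :
    lowTail k p d = ∑ j ∈ range (d + 1), (k.choose j : ℝ) * p ^ j * (1 - p) ^ (k - j) := by
  rw [lowTail, ← sum_filter]
  congr 1
  ext j
  simp only [mem_filter, mem_range]
  omega

lemma lowTail_zero (k : ℕ) (p : ℝ) : lowTail k p 0 = (1 - p) ^ k := by
  simp [lowTail_eq_sum_range (Nat.zero_le k)]

lemma binomTail_one (k : ℕ) (p : ℝ) : binomTail k p 1 = 1 - (1 - p) ^ k := by
  have h := binomTail_add_lowTail k 0 p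
  rw [lowTail_zero, Nat.cast_zero, zero_add] at h
  linarith

-- Chernoff's argument with tilt `2`: each term with `j ≤ d` is at most `2 ^ (d - j)` times itself.
lemma lowTail_le_two_pow_mul_exp (k d : ℕ) {p : ℝ} (hp0 : 0 ≤ p) (hp1 : p ≤ 1) :
    lowTail k p d ≤ 2 ^ d * exp (-(k * p / 2)) := by
  have hq : 0 ≤ 1 - p := by linarith
  calc lowTail k p d
      ≤ ∑ j ∈ range (k + 1), 2 ^ d * ((k.choose j : ℝ) * (p / 2) ^ j * (1 - p) ^ (k - j)) := by
        refine sum_le_sum fun j _ => ?_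
        split_ifs with hj
        · have h2 : (1 : ℝ) ≤ 2 ^ d / 2 ^ j :=
            (one_le_div (by positivity)).2 (pow_le_pow_right₀ (by norm_num) hj)
          calc (k.choose j : ℝ) * p ^ j * (1 - p) ^ (k - j)
              ≤ 2 ^ d / 2 ^ j * ((k.choose j : ℝ) * p ^ j * (1 - p) ^ (k - j)) :=
                le_mul_of_one_le_left (by positivity) h2
            _ = _ := by rw [div_pow]; field_simp
        · positivity
    _ = 2 ^ d * (1 - p / 2) ^ k := by
        rw [← mul_sum, sum_range_choose_mul_pow_mul_pow]; congr 2; ring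
    _ ≤ 2 ^ d * exp (-(k * p / 2)) := by
        have h := one_sub_pow_le_exp_neg_mul k (p := p / 2) (by linarith)
        rw [← mul_div_assoc] at h
        gcongr

lemma lowTail_one (n : ℕ) (p : ℝ) : lowTail (n + 1) p 1 = (1 - p) ^ n * (1 + n * p) := by
  rw [lowTail_eq_sum_range (by omega)]
  simp only [sum_range_succ, range_one, sum_singleton, Nat.choose_zero_right,
    Nat.choose_one_right, Nat.cast_one, Nat.cast_add, pow_zero, pow_one, one_mul, mul_one,
    tsub_zero, add_tsub_cancel_right]
  ring

lemma antitoneOn_one_sub_pow_mul_one_add (n : ℕ) :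
    AntitoneOn (fun p : ℝ => (1 - p) ^ n * (1 + n * p)) (Set.Icc 0 1) := by
  refine antitoneOn_of_deriv_nonpos (convex_Icc 0 1) (by fun_prop) (by fun_prop) fun p hp => ?_
  rw [interior_Icc] at hp
  have hq : 0 ≤ 1 - p := by linarith [hp.2]
  have hd : HasDerivAt (fun p : ℝ => (1 - p) ^ n * (1 + n * p))
      (-(n * (n + 1) * p * (1 - p) ^ (n - 1))) p := by
    refine ((((hasDerivAt_id' p).const_sub 1).fun_pow n).fun_mul
      (((hasDerivAt_id' p).const_mul (n : ℝ)).const_add 1)).congr_deriv ?_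
    rcases n with _ | n
    · simp
    · simp only [Nat.add_sub_cancel, pow_succ]; push_cast; ring
  rw [hd.deriv, neg_nonpos]
  have := hp.1
  positivity

lemma one_sub_pow_mul_one_add_le_half {n : ℕ} (hn : 2 ≤ n) :
    (1 - 2 / (n + 1 : ℝ)) ^ n * (1 + n * (2 / (n + 1))) ≤ 1 / 2 := by
  rcases le_or_gt n 8 with hn8 | hn8
  · interval_cases n <;> norm_num
  have hn9 : (9 : ℝ) ≤ n := by exact_mod_cast hn8
  have hpow : (1 - 2 / (n + 1 : ℝ)) ^ n ≤ 6⁻¹ := by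
    calc (1 - 2 / (n + 1 : ℝ)) ^ n ≤ exp (-(n * (2 / (n + 1)))) :=
          one_sub_pow_le_exp_neg_mul n (by rw [div_le_one (by positivity)]; linarith)
      _ ≤ exp (-((9 : ℕ) / (5 : ℕ))) := by
          gcongr
          rw [← mul_div_assoc, le_div_iff₀ (by positivity)]
          push_cast
          linarith
      _ ≤ 6⁻¹ := exp_neg_le_inv_of_pow_le (by norm_num) (by norm_num) (by norm_num)
  have hfac : 1 + n * (2 / (n + 1 : ℝ)) ≤ 3 := by
    rw [← mul_div_assoc, ← sub_nonneg]
    field_simp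
    linarith
  calc (1 - 2 / (n + 1 : ℝ)) ^ n * (1 + n * (2 / (n + 1))) ≤ 6⁻¹ * 3 := by
        gcongr
    _ = 1 / 2 := by norm_num

lemma lowTail_one_le_half {k : ℕ} {p : ℝ} (hp1 : p ≤ 1) (hkp : 2 < k * p) :
    lowTail k p 1 ≤ 1 / 2 := by
  have hk : (2 : ℝ) < k := by nlinarith [(Nat.cast_nonneg k : (0 : ℝ) ≤ k)]
  obtain ⟨n, rfl⟩ : ∃ n, k = n + 1 := ⟨k - 1, by
    have : 2 < k := by exact_mod_cast hk
    omega⟩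
  have hn : 2 ≤ n := by
    have : 2 < n + 1 := by exact_mod_cast hk
    omega
  push_cast at hkp
  have hp2 : 2 / (n + 1 : ℝ) ≤ p := by rw [div_le_iff₀ (by positivity)]; linarith
  rw [lowTail_one]
  calc (1 - p) ^ n * (1 + n * p) ≤ (1 - 2 / (n + 1 : ℝ)) ^ n * (1 + n * (2 / (n + 1))) :=
        antitoneOn_one_sub_pow_mul_one_add n ⟨by positivity, by
          rw [div_le_one (by positivity)]; exact_mod_cast (by omega : 2 ≤ n + 1)⟩
          ⟨by linarith [show (0 : ℝ) < 2 / (n + 1) by positivity], hp1⟩ hp2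
    _ ≤ 1 / 2 := one_sub_pow_mul_one_add_le_half hn

lemma lowTail_two_le (n : ℕ) {p : ℝ} (hp0 : 0 ≤ p) (hp1 : p ≤ 1) :
    lowTail (n + 2) p 2 ≤ (1 - p) ^ n * (1 + (n + 2) * p + ((n + 2) * p) ^ 2 / 2) := by
  have hq : 0 ≤ 1 - p := by linarith
  rw [lowTail_eq_sum_range (by omega)]
  simp only [sum_range_succ, sum_range_zero, Nat.choose_zero_right, Nat.choose_one_right,
    Nat.cast_choose_two]
  have hexp : ∀ j ≤ 2, n + 2 - j = n + (2 - j) := fun j hj => by omega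
  rw [hexp 0 (by omega), hexp 1 (by omega), hexp 2 le_rfl]
  simp only [pow_add]
  push_cast
  have : (1 - p) ^ 2 + (n + 2) * p * (1 - p) + (n + 2) * (n + 2 - 1) / 2 * p ^ 2
      ≤ 1 + (n + 2) * p + ((n + 2) * p) ^ 2 / 2 := by nlinarith
  calc _ = (1 - p) ^ n *
        ((1 - p) ^ 2 + (n + 2) * p * (1 - p) + (n + 2) * (n + 2 - 1) / 2 * p ^ 2) := by ring
    _ ≤ _ := by gcongr

lemma lowTail_two_le_half {k : ℕ} {p : ℝ} (hp1 : p ≤ 1) (h4 : 4 < k * p) (h6 : k * p ≤ 6) :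
    lowTail k p 2 ≤ 1 / 2 := by
  have hk : (4 : ℝ) < k := by nlinarith [(Nat.cast_nonneg k : (0 : ℝ) ≤ k)]
  obtain ⟨n, rfl⟩ : ∃ n, k = n + 2 := ⟨k - 2, by
    have : 4 < k := by exact_mod_cast hk
    omega⟩
  push_cast at hk h4 h6
  have hp0 : 0 < p := by nlinarith
  refine (lowTail_two_le n hp0.le hp1).trans ?_
  rcases le_or_gt n 14 with hn | hn
  · have hn3 : 3 ≤ n := by
      have : (2 : ℝ) < n := by linarith
      exact_mod_cast this
    have hp4 : 1 - p ≤ 1 - 4 / (n + 2) := by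
      rw [sub_le_sub_iff_left, div_le_iff₀ (by positivity)]; linarith
    have hnum : (1 - 4 / (n + 2 : ℝ)) ^ n * 25 ≤ 1 / 2 := by
      interval_cases n <;> norm_num
    calc (1 - p) ^ n * (1 + (n + 2) * p + ((n + 2) * p) ^ 2 / 2)
        ≤ (1 - 4 / (n + 2 : ℝ)) ^ n * 25 := by
          have hq : 0 ≤ 1 - p := by linarith
          exact mul_le_mul (pow_le_pow_left₀ hq hp4 n) (by nlinarith) (by positivity)
            (pow_nonneg (hq.trans hp4) n)
      _ ≤ 1 / 2 := hnum
  · have hn15 : (15 : ℝ) ≤ n := by exact_mod_cast hn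
    have hp : p ≤ 6 / 17 := by
      rw [le_div_iff₀ (by norm_num)]; nlinarith
    set l := (n + 2 : ℝ) * p
    calc (1 - p) ^ n * (1 + l + l ^ 2 / 2)
        ≤ exp (-(n * p)) * (13 * exp (l - 4)) := by
          gcongr
          · exact one_sub_pow_le_exp_neg_mul n hp1
          · calc 1 + l + l ^ 2 / 2 ≤ 13 * (1 + (l - 4) / 2) ^ 2 := by nlinarith
              _ ≤ 13 * exp (l - 4) := by gcongr; exact one_add_half_sq_le_exp (by linarith)
      _ = 13 * exp (2 * p - 4) := by
          rw [mul_left_comm, ← exp_add]; congr 2; ring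
      _ ≤ 13 * exp (-((56 : ℕ) / (17 : ℕ))) := by gcongr; push_cast; linarith
      _ ≤ 13 * 26⁻¹ := by
          gcongr; exact exp_neg_le_inv_of_pow_le (by norm_num) (by norm_num) (by norm_num)
      _ ≤ 1 / 2 := by norm_num

lemma lowTail_le_half {k d : ℕ} {p : ℝ} (hp0 : 0 ≤ p) (hp1 : p ≤ 1) (hkp : 1 < k * p)
    (hd : (d : ℝ) < k * p / 2) (hd' : k * p / 2 ≤ d + 1) : lowTail k p d ≤ 1 / 2 := by
  match d, hd, hd' with
  | 0, _, _ =>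
    calc lowTail k p 0 = (1 - p) ^ k := lowTail_zero k p
      _ ≤ exp (-((1 : ℕ) / (1 : ℕ))) := (one_sub_pow_le_exp_neg_mul k hp1).trans
          (by gcongr; push_cast; linarith)
      _ ≤ 2⁻¹ := exp_neg_le_inv_of_pow_le (by norm_num) (by norm_num) (by norm_num)
      _ = 1 / 2 := by norm_num
  | 1, hd, _ => exact lowTail_one_le_half hp1 (by push_cast at hd; linarith)
  | 2, hd, hd' =>
    push_cast at hd hd'
    exact lowTail_two_le_half hp1 (by linarith) (by linarith)
  | d + 3, hd, _ =>
    have hexp : exp (-1) ≤ (2.7 : ℝ)⁻¹ := by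
      simpa using exp_neg_le_inv_of_pow_le (a := 2.7) (m := 1) (n := 1) (by norm_num)
        (by norm_num) (by norm_num)
    have hbase : 2 * exp (-1) ≤ 1 := by linarith
    calc lowTail k p (d + 3) ≤ 2 ^ (d + 3) * exp (-(k * p / 2)) :=
          lowTail_le_two_pow_mul_exp k (d + 3) hp0 hp1
      _ ≤ 2 ^ (d + 3) * exp (-1) ^ (d + 3) := by
          rw [← exp_nat_mul]; gcongr; push_cast at hd ⊢; linarith
      _ = (2 * exp (-1)) ^ (d + 3) := (mul_pow _ _ _).symm
      _ ≤ (2 * exp (-1)) ^ 3 := pow_le_pow_of_le_one (by positivity) hbase (by omega)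
      _ ≤ (2 * (2.7 : ℝ)⁻¹) ^ 3 := by gcongr
      _ ≤ 1 / 2 := by norm_num

lemma half_le_binomTail_ceil_half {k : ℕ} {p : ℝ} (hp0 : 0 ≤ p) (hp1 : p ≤ 1)
    (hkp : 1 < k * p) : 1 / 2 ≤ binomTail k p ⌈k * p / 2⌉ := by
  obtain ⟨d, hd⟩ : ∃ d : ℕ, ⌈(k * p / 2 : ℝ)⌉ = d + 1 := by
    have : 0 < ⌈(k * p / 2 : ℝ)⌉ := Int.ceil_pos.2 (by linarith)
    exact ⟨(⌈(k * p / 2 : ℝ)⌉ - 1).toNat, by omega⟩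
  have hbounds := Int.ceil_eq_iff.1 hd
  push_cast at hbounds
  have h := binomTail_add_lowTail k d p
  have := lowTail_le_half hp0 hp1 hkp (by linarith [hbounds.1]) hbounds.2
  rw [hd]
  linarith

noncomputable def potentialDrop (l : ℝ) : ℕ := if l ≤ 1 then 4 else 2

lemma one_le_potentialDrop_mul_binomTail {k : ℕ} {p : ℝ} (hp0 : 0 ≤ p) (hp1 : p ≤ 1)
    (hkp : 0.29 ≤ k * p) : 1 ≤ potentialDrop (k * p) * binomTail k p ⌈k * p / 2⌉ := by
  unfold potentialDrop
  split_ifs with h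
  · have hc : ⌈(k * p / 2 : ℝ)⌉ = 1 := Int.ceil_eq_iff.2 (by norm_num; constructor <;> linarith)
    have hexp : (1 - p) ^ k ≤ (4 / 3 : ℝ)⁻¹ :=
      calc (1 - p) ^ k ≤ exp (-((29 : ℕ) / (100 : ℕ))) :=
            (one_sub_pow_le_exp_neg_mul k hp1).trans (by gcongr; norm_num; linarith)
        _ ≤ (4 / 3 : ℝ)⁻¹ := exp_neg_le_inv_of_pow_le (by norm_num) (by norm_num) (by norm_num)
    rw [hc, binomTail_one]
    push_cast
    linarith
  · have := half_le_binomTail_ceil_half hp0 hp1 (not_le.1 h)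
    push_cast
    linarith

noncomputable def level (s B : ℝ) (i : ℕ) : ℝ := min B ((1 + s) ^ i)

lemma one_le_level {s B : ℝ} (hs : 0 ≤ s) (hB : 1 ≤ B) (i : ℕ) : 1 ≤ level s B i :=
  le_min hB (one_le_pow₀ (by linarith))

lemma level_zero {s B : ℝ} (hB : 1 ≤ B) : level s B 0 = 1 := by
  rw [level, pow_zero, min_eq_right hB]

lemma level_succ_le {s B : ℝ} (hs : 0 ≤ s) (hB : 0 ≤ B) (i : ℕ) :
    level s B (i + 1) ≤ level s B i * (1 + s) := by
  rw [level, level, min_mul_of_nonneg _ _ (by linarith), pow_succ]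
  exact min_le_min_right _ (le_mul_of_one_le_right hB (by linarith))

noncomputable def phase (s B : ℝ) (i : ℕ) : Finset ℤ := Finset.Ico ⌈level s B i⌉ ⌈level s B (i + 1)⌉

lemma mem_phase {s B : ℝ} {i : ℕ} {x : ℤ} :
    x ∈ phase s B i ↔ level s B i ≤ x ∧ (x : ℝ) < level s B (i + 1) := by
  rw [phase, Finset.mem_Ico, Int.ceil_le, Int.lt_ceil]

lemma exists_mem_phase {s B : ℝ} {m : ℕ} (hB : 1 ≤ B) (hBm : B ≤ (1 + s) ^ m)
    {x : ℤ} (hx1 : 1 ≤ x) (hxB : (x : ℝ) < B) : ∃ i < m, x ∈ phase s B i := by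
  have hex : ∃ j, (x : ℝ) < level s B j := ⟨m, lt_min hxB (hxB.trans_le hBm)⟩
  have hj0 : Nat.find hex ≠ 0 := by
    intro h
    have := Nat.find_spec hex
    rw [h, level_zero hB] at this
    exact absurd this (not_lt.2 (by exact_mod_cast hx1))
  refine ⟨Nat.find hex - 1, ?_, mem_phase.2 ⟨not_lt.1 (Nat.find_min hex (by omega)), ?_⟩⟩
  · have := Nat.find_min' hex (lt_min hxB (hxB.trans_le hBm) : (x : ℝ) < level s B m)
    omega
  · rw [Nat.sub_add_cancel (Nat.pos_of_ne_zero hj0)]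
    exact Nat.find_spec hex

-- `2` marks the states from which one jump by the factor `1 + s / 2` ends phase `i`.
noncomputable def potential (s B : ℝ) (i : ℕ) (x : ℤ) : ℕ :=
  if level s B (i + 1) ≤ x then 0
  else if 1 < s * x ∧ level s B (i + 1) ≤ x * (1 + s / 2) then 2 else 4

lemma potential_le_four (s B : ℝ) (i : ℕ) (x : ℤ) : potential s B i x ≤ 4 := by
  unfold potential; split_ifs <;> omega

lemma potential_antitone {s : ℝ} (B : ℝ) (hs : 0 ≤ s) (i : ℕ) : Antitone (potential s B i) := by
  intro x x' hxx'
  have h : (x : ℝ) ≤ x' := by exact_mod_cast hxx'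
  have h1 : s * x ≤ s * x' := mul_le_mul_of_nonneg_left h hs
  have h2 : (x : ℝ) * (1 + s / 2) ≤ x' * (1 + s / 2) := mul_le_mul_of_nonneg_right h (by linarith)
  unfold potential
  split_ifs <;> first | omega | (exfalso; grind)

lemma potential_add_potentialDrop_le {s B : ℝ} {i : ℕ} {x y : ℤ} (hs : 0 < s) (hB : 0 ≤ B)
    (hx0 : 0 < x) (hx : x ∈ phase s B i) (hy : ⌈s * x / 2⌉ ≤ y) :
    potential s B i (x + y) + potentialDrop (s * x) ≤ potential s B i x := by
  obtain ⟨hlo, hhi⟩ := mem_phase.1 hx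
  have hxR : (0 : ℝ) < x := by exact_mod_cast hx0
  have hy1 : (1 : ℝ) ≤ y := by
    have : 0 < ⌈s * x / 2⌉ := Int.ceil_pos.2 (by positivity)
    exact_mod_cast (show (1 : ℤ) ≤ y by omega)
  have hys : s * x / 2 ≤ y := Int.ceil_le.1 hy
  have hL : level s B (i + 1) ≤ x * (1 + s) :=
    (level_succ_le hs.le hB i).trans (mul_le_mul_of_nonneg_right hlo (by linarith))
  have hgrow : ¬ s * x ≤ 1 →
      1 < s * (x + y) ∧ level s B (i + 1) ≤ (x + y) * (1 + s / 2) := fun h =>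
    ⟨by nlinarith, by nlinarith⟩
  unfold potential potentialDrop
  push_cast
  split_ifs <;> first | omega | (exfalso; nlinarith) | tauto

noncomputable def successDrop (s B : ℝ) (i : ℕ) (x y : ℤ) : ℕ :=
  if x ∈ phase s B i ∧ ⌈s * x / 2⌉ ≤ y then potentialDrop (s * x) else 0

lemma successDrop_add_potential_le {s B : ℝ} {i : ℕ} {x y : ℤ} (hs : 0 < s) (hB : 1 ≤ B)
    (hy : 0 ≤ y) : successDrop s B i x y + potential s B i (x + y) ≤ potential s B i x := by
  unfold successDrop
  split_ifs with h
  · have hx1 : (1 : ℝ) ≤ x := (one_le_level hs.le hB i).trans (mem_phase.1 h.1).1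
    rw [add_comm]
    exact potential_add_potentialDrop_le hs (by linarith) (by exact_mod_cast hx1) h.1 h.2
  · rw [zero_add]
    exact potential_antitone B hs.le i (le_add_of_nonneg_right hy)

lemma natCast_sInf_le_tsum (p : ℕ → Prop) [DecidablePred p] :
    ((sInf {t | p t} : ℕ) : ℝ≥0∞) ≤ ∑' t, if p t then 0 else 1 := by
  calc ((sInf {t | p t} : ℕ) : ℝ≥0∞) = ∑ t ∈ range (sInf {t | p t}), if p t then 0 else 1 := by
        rw [sum_congr rfl fun t ht =>
          if_neg (show ¬ p t from Nat.notMem_of_lt_sInf (s := {t | p t}) (mem_range.1 ht))]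
        simp
    _ ≤ ∑' t, if p t then 0 else 1 := ENNReal.sum_le_tsum _

lemma tsum_le_of_add_le_succ {a Φ : ℕ → ℝ≥0∞} (h : ∀ t, a t + Φ (t + 1) ≤ Φ t) :
    ∑' t, a t ≤ Φ 0 := by
  have hpartial : ∀ n, ∑ t ∈ range n, a t + Φ n ≤ Φ 0 := by
    intro n
    induction n with
    | zero => simp
    | succ n ih =>
      calc ∑ t ∈ range (n + 1), a t + Φ (n + 1) = ∑ t ∈ range n, a t + (a n + Φ (n + 1)) := by
            rw [sum_range_succ, add_assoc]
        _ ≤ Φ 0 := (add_le_add le_rfl (h n)).trans ih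
  exact ENNReal.tsum_le_of_sum_range_le fun n => le_self_add.trans (hpartial n)

section CondExp

variable {Ω : Type*} {m m0 : MeasurableSpace Ω} {μ : Measure Ω}

lemma ofReal_mul_measure_le_measure_inter [IsFiniteMeasure μ] (hm : m ≤ m0) {A S : Set Ω}
    (hA : MeasurableSet[m] A) (hS : MeasurableSet S) {q : ℝ}
    (hq : ∀ᵐ ω ∂μ, ω ∈ A → q ≤ μ[S.indicator (fun _ => (1 : ℝ)) | m] ω) :
    ENNReal.ofReal q * μ A ≤ μ (A ∩ S) := by
  rcases lt_or_ge q 0 with hq0 | hq0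
  · simp [ENNReal.ofReal_of_nonpos hq0.le]
  have hreal : q * μ.real A ≤ μ.real (A ∩ S) :=
    calc q * μ.real A = ∫ _ in A, q ∂μ := by rw [setIntegral_const, smul_eq_mul, mul_comm]
      _ ≤ ∫ ω in A, μ[S.indicator (fun _ => (1 : ℝ)) | m] ω ∂μ :=
          setIntegral_mono_ae_restrict (integrableOn_const (measure_ne_top μ A))
            integrable_condExp.integrableOn ((ae_restrict_iff' (hm A hA)).2 hq)
      _ = ∫ ω in A, S.indicator (fun _ => (1 : ℝ)) ω ∂μ :=
          setIntegral_condExp hm ((integrable_const 1).indicator hS) hA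
      _ = μ.real (A ∩ S) := by
          rw [setIntegral_indicator hS, setIntegral_const, smul_eq_mul, mul_one]
  rw [← ENNReal.ofReal_toReal (measure_ne_top μ A), ← ENNReal.ofReal_mul hq0,
    ← ENNReal.ofReal_toReal (measure_ne_top μ (A ∩ S))]
  exact ENNReal.ofReal_le_ofReal hreal

lemma ae_mem_of_one_le_condExp_indicator [IsProbabilityMeasure μ] (hm : m ≤ m0) {S : Set Ω}
    (hS : MeasurableSet S) (h : ∀ᵐ ω ∂μ, 1 ≤ μ[S.indicator (fun _ => (1 : ℝ)) | m] ω) :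
    ∀ᵐ ω ∂μ, ω ∈ S := by
  have := ofReal_mul_measure_le_measure_inter hm MeasurableSet.univ hS
    (h.mono fun _ hω _ => hω)
  rw [ENNReal.ofReal_one, one_mul, measure_univ, Set.univ_inter] at this
  exact (mem_ae_iff_prob_eq_one hS).2 (le_antisymm prob_le_one this)

end CondExp

lemma lintegral_hittingTime_le {Ω : Type*} {mΩ : MeasurableSpace Ω} {μ : Measure Ω} {B : ℝ}
    {X : ℕ → Ω → ℤ} (hXm : ∀ t, Measurable (X t)) {T : Ω → ℕ}
    (hT : ∀ ω, T ω = sInf {t | B ≤ (X t ω : ℝ)}) :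
    ∫⁻ ω, (T ω : ℝ≥0∞) ∂μ ≤ ∑' t, μ {ω | (X t ω : ℝ) < B} := by
  have hmeas : ∀ t, MeasurableSet {ω | (X t ω : ℝ) < B} := fun t =>
    hXm t (MeasurableSet.of_discrete (s := {z : ℤ | (z : ℝ) < B}))
  calc ∫⁻ ω, (T ω : ℝ≥0∞) ∂μ ≤ ∫⁻ ω, ∑' t, {ω | (X t ω : ℝ) < B}.indicator 1 ω ∂μ :=
        lintegral_mono fun ω => by
          rw [hT]
          convert natCast_sInf_le_tsum (fun t => B ≤ (X t ω : ℝ)) using 3 with t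
          simp [Set.indicator_apply, ← not_lt, ite_not]
    _ = ∑' t, μ {ω | (X t ω : ℝ) < B} := by
        rw [lintegral_tsum fun t => (measurable_one.indicator (hmeas t)).aemeasurable]
        simp only [lintegral_indicator_one (hmeas _)]

lemma measure_lt_le_sum_measure_phase {Ω : Type*} {mΩ : MeasurableSpace Ω} {μ : Measure Ω}
    {s B : ℝ} {m : ℕ} {Z : Ω → ℤ} (hB : 1 ≤ B) (hBm : B ≤ (1 + s) ^ m)
    (hZ : ∀ᵐ ω ∂μ, 1 ≤ Z ω) :
    μ {ω | (Z ω : ℝ) < B} ≤ ∑ i ∈ range m, μ {ω | Z ω ∈ phase s B i} :=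
  calc μ {ω | (Z ω : ℝ) < B} ≤ μ (⋃ i ∈ range m, {ω | Z ω ∈ phase s B i}) :=
        measure_mono_ae <| hZ.mono fun ω h1 hlt => by
          obtain ⟨i, hi, hmem⟩ := exists_mem_phase hB hBm h1 hlt
          exact Set.mem_biUnion (mem_range.2 hi) hmem
    _ ≤ _ := measure_biUnion_finset_le _ _

section Step

variable {Ω : Type*} {m mΩ : MeasurableSpace Ω} {P : Measure Ω} [IsProbabilityMeasure P]
  {k : ℕ} {r B : ℝ} {U V : Ω → ℤ}

lemma measure_eq_le_potentialDrop_mul_measure_inter (hm : m ≤ mΩ) (hU : Measurable[m] U)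
    (hV : Measurable V) (hr : 0 < r) (hkr : 0.29 ≤ k * r) (hBr : B ≤ r⁻¹)
    (hdom : ∀ c : ℤ, ∀ᵐ ω ∂P, binomTail k (min (r * U ω) 1) c ≤
      P[{ω' | c ≤ V ω'}.indicator (fun _ => (1 : ℝ)) | m] ω)
    {x : ℤ} (hx1 : 1 ≤ x) (hxB : (x : ℝ) < B) :
    P {ω | U ω = x} ≤
      potentialDrop (k * r * x) * P ({ω | U ω = x} ∩ {ω | ⌈k * r * x / 2⌉ ≤ V ω}) := by
  have hx : (1 : ℝ) ≤ x := by exact_mod_cast hx1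
  have hp1 : r * x ≤ 1 :=
    calc r * x ≤ r * r⁻¹ := by gcongr; linarith
      _ = 1 := mul_inv_cancel₀ hr.ne'
  set q := binomTail k (r * x) ⌈k * r * x / 2⌉
  have hq : 1 ≤ potentialDrop (k * r * x) * q := by
    have h := one_le_potentialDrop_mul_binomTail (k := k) (by positivity) hp1
      (hkr.trans (by rw [← mul_assoc]; exact le_mul_of_one_le_right (by positivity) hx))
    rwa [← mul_assoc] at h
  have hslice : ENNReal.ofReal q * P {ω | U ω = x} ≤
      P ({ω | U ω = x} ∩ {ω | ⌈k * r * x / 2⌉ ≤ V ω}) :=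
    ofReal_mul_measure_le_measure_inter hm (hU (measurableSet_singleton x))
      (hV measurableSet_Ici) <| by
        filter_upwards [hdom ⌈k * r * x / 2⌉] with ω hω hωx
        rwa [show U ω = x from hωx, min_eq_left hp1] at hω
  calc P {ω | U ω = x} ≤ ENNReal.ofReal (potentialDrop (k * r * x) * q) * P {ω | U ω = x} :=
        le_mul_of_one_le_left zero_le (ENNReal.one_le_ofReal.2 hq)
    _ = potentialDrop (k * r * x) * (ENNReal.ofReal q * P {ω | U ω = x}) := by
        rw [ENNReal.ofReal_mul (by positivity), ENNReal.ofReal_natCast, mul_assoc]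
    _ ≤ _ := by gcongr

lemma measure_phase_le_lintegral_successDrop (hm : m ≤ mΩ) (hU : Measurable[m] U)
    (hV : Measurable V) (hr : 0 < r) (hkr : 0.29 ≤ k * r) (hB : 1 ≤ B) (hBr : B ≤ r⁻¹)
    (hdom : ∀ c : ℤ, ∀ᵐ ω ∂P, binomTail k (min (r * U ω) 1) c ≤
      P[{ω' | c ≤ V ω'}.indicator (fun _ => (1 : ℝ)) | m] ω) (i : ℕ) :
    P {ω | U ω ∈ phase (k * r) B i} ≤
      ∫⁻ ω, (successDrop (k * r) B i (U ω) (V ω) : ℝ≥0∞) ∂P := by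
  set s := (k : ℝ) * r
  have hsucc : ∀ x : ℤ, MeasurableSet ({ω | U ω = x} ∩ {ω | ⌈s * x / 2⌉ ≤ V ω}) := fun x =>
    (hU.mono hm le_rfl (measurableSet_singleton x)).inter (hV measurableSet_Ici)
  have hsum : (fun ω => (successDrop s B i (U ω) (V ω) : ℝ≥0∞)) = fun ω =>
      ∑ x ∈ phase s B i, ({ω | U ω = x} ∩ {ω | ⌈s * x / 2⌉ ≤ V ω}).indicator
        (fun _ => (potentialDrop (s * x) : ℝ≥0∞)) ω := by
    funext ω
    simp only [successDrop, Set.indicator_apply, Set.mem_inter_iff, Set.mem_ofPred_eq, ite_and,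
      sum_ite_eq, Nat.cast_ite, Nat.cast_zero]
  rw [hsum, lintegral_finsetSum _ fun x _ => measurable_const.indicator (hsucc x)]
  calc P {ω | U ω ∈ phase s B i} = P (⋃ x ∈ phase s B i, {ω | U ω = x}) := by
        congr 1; ext ω; simp
    _ ≤ ∑ x ∈ phase s B i, P {ω | U ω = x} := measure_biUnion_finset_le _ _
    _ ≤ _ := sum_le_sum fun x hx => by
        obtain ⟨hlo, hhi⟩ := mem_phase.1 hx
        rw [lintegral_indicator_const (hsucc x)]
        exact measure_eq_le_potentialDrop_mul_measure_inter hm hU hV hr hkr hBr hdom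
          (by exact_mod_cast (one_le_level (by positivity) hB i).trans hlo)
          (hhi.trans_le (min_le_left _ _))

lemma measure_phase_add_lintegral_potential_le (hm : m ≤ mΩ) (hU : Measurable[m] U)
    (hV : Measurable V) (hr : 0 < r) (hkr : 0.29 ≤ k * r) (hB : 1 ≤ B) (hBr : B ≤ r⁻¹)
    (hdom : ∀ c : ℤ, ∀ᵐ ω ∂P, binomTail k (min (r * U ω) 1) c ≤
      P[{ω' | c ≤ V ω'}.indicator (fun _ => (1 : ℝ)) | m] ω)
    (hV0 : ∀ᵐ ω ∂P, 0 ≤ V ω) (i : ℕ) :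
    P {ω | U ω ∈ phase (k * r) B i} + ∫⁻ ω, (potential (k * r) B i (U ω + V ω) : ℝ≥0∞) ∂P
      ≤ ∫⁻ ω, (potential (k * r) B i (U ω) : ℝ≥0∞) ∂P := by
  have hpot : Measurable fun ω => (potential (k * r) B i (U ω + V ω) : ℝ≥0∞) :=
    (Measurable.of_discrete (f := fun z : ℤ => (potential (k * r) B i z : ℝ≥0∞))).comp
      ((hU.mono hm le_rfl).add hV)
  calc _ ≤ ∫⁻ ω, (successDrop (k * r) B i (U ω) (V ω) : ℝ≥0∞) ∂P +
        ∫⁻ ω, (potential (k * r) B i (U ω + V ω) : ℝ≥0∞) ∂P := by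
        gcongr
        exact measure_phase_le_lintegral_successDrop hm hU hV hr hkr hB hBr hdom i
    _ = ∫⁻ ω, ((successDrop (k * r) B i (U ω) (V ω) +
        potential (k * r) B i (U ω + V ω) : ℕ) : ℝ≥0∞) ∂P := by
        rw [← lintegral_add_right _ hpot]
        simp only [Nat.cast_add]
    _ ≤ _ := lintegral_mono_ae <| hV0.mono fun ω hω =>
        Nat.cast_le.2 (successDrop_add_potential_le (by linarith) hB hω)

end Step

lemma ae_one_le_of_increment_nonneg {Ω : Type*} {mΩ : MeasurableSpace Ω} {μ : Measure Ω}
    {X Y : ℕ → Ω → ℤ} (hX0 : ∀ ω, X 0 ω = 1)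
    (hrec : ∀ t ω, X (t + 1) ω = X t ω + Y (t + 1) ω)
    (hY0 : ∀ t, ∀ᵐ ω ∂μ, 0 ≤ Y (t + 1) ω) (t : ℕ) : ∀ᵐ ω ∂μ, 1 ≤ X t ω := by
  filter_upwards [ae_all_iff.2 hY0] with ω hω
  induction t with
  | zero => rw [hX0]
  | succ t ih => rw [hrec]; linarith [hω t]

section Iteration

variable {Ω : Type*} {mΩ : MeasurableSpace Ω} {P : Measure Ω} [IsProbabilityMeasure P]
  {𝓕 : Filtration ℕ mΩ} {k : ℕ} {r B : ℝ} {X Y : ℕ → Ω → ℤ}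

lemma ae_increment_nonneg (hYad : ∀ t, Measurable[𝓕 (t + 1)] (Y (t + 1)))
    (hdom : ∀ t (c : ℤ), ∀ᵐ ω ∂P, binomTail k (min (r * (X t ω : ℝ)) 1) c ≤
        (P[({ω' | c ≤ Y (t + 1) ω'}).indicator (fun _ => (1 : ℝ)) | 𝓕 t]) ω) (t : ℕ) :
    ∀ᵐ ω ∂P, 0 ≤ Y (t + 1) ω :=
  ae_mem_of_one_le_condExp_indicator (𝓕.le t)
    ((hYad t).mono (𝓕.le _) le_rfl measurableSet_Ici)
    ((hdom t 0).mono fun ω hω => by rwa [binomTail_zero] at hω)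

lemma tsum_measure_phase_le_four (hXad : ∀ t, Measurable[𝓕 t] (X t))
    (hYad : ∀ t, Measurable[𝓕 (t + 1)] (Y (t + 1)))
    (hrec : ∀ t ω, X (t + 1) ω = X t ω + Y (t + 1) ω)
    (hdom : ∀ t (c : ℤ), ∀ᵐ ω ∂P, binomTail k (min (r * (X t ω : ℝ)) 1) c ≤
        (P[({ω' | c ≤ Y (t + 1) ω'}).indicator (fun _ => (1 : ℝ)) | 𝓕 t]) ω)
    (hr : 0 < r) (hkr : 0.29 ≤ k * r) (hB : 1 ≤ B) (hBr : B ≤ r⁻¹) (i : ℕ) :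
    ∑' t, P {ω | X t ω ∈ phase (k * r) B i} ≤ 4 := by
  refine (tsum_le_of_add_le_succ
    (Φ := fun t => ∫⁻ ω, (potential (k * r) B i (X t ω) : ℝ≥0∞) ∂P) fun t => ?_).trans ?_
  · simp only [hrec]
    exact measure_phase_add_lintegral_potential_le (𝓕.le t) (hXad t)
      ((hYad t).mono (𝓕.le _) le_rfl) hr hkr hB hBr (hdom t) (ae_increment_nonneg hYad hdom t) i
  · calc ∫⁻ ω, (potential (k * r) B i (X 0 ω) : ℝ≥0∞) ∂P ≤ ∫⁻ _, 4 ∂P :=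
          lintegral_mono fun ω => Nat.cast_le_ofNat.2 (potential_le_four (k * r) B i (X 0 ω))
      _ = 4 := by simp

end Iteration

end MultiplicativeGrowth

open MultiplicativeGrowth

theorem stmt_4_general {Ω : Type*} {mΩ : MeasurableSpace Ω} (P : Measure Ω) [IsProbabilityMeasure P]
    (k : ℕ) (r : ℝ) (hr : r ∈ Set.Ioo (0 : ℝ) 1) (hkr : 0.29 ≤ (k : ℝ) * r)
    (𝓕 : Filtration ℕ mΩ)
    (X Y : ℕ → Ω → ℤ)
    (hXad : ∀ t, Measurable[𝓕 t] (X t))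
    (hYad : ∀ t, Measurable[𝓕 (t + 1)] (Y (t + 1)))
    (hX0 : ∀ ω, X 0 ω = 1)
    (hrec : ∀ t ω, X (t + 1) ω = X t ω + Y (t + 1) ω)
    (hdom : ∀ t (c : ℤ), ∀ᵐ ω ∂P,
      binomTail k (min (r * (X t ω : ℝ)) 1) c ≤
        (P[({ω' | c ≤ Y (t + 1) ω'}).indicator (fun _ => (1 : ℝ)) | 𝓕 t]) ω)
    (B : ℝ) (hB : B ∈ Set.Icc (1 : ℝ) r⁻¹)
    (T : Ω → ℕ) (hT : ∀ ω, T ω = sInf {t : ℕ | B ≤ (X t ω : ℝ)}) :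
    ∫⁻ ω, (T ω : ℝ≥0∞) ∂P ≤
      ENNReal.ofReal (4 * (⌈Real.log B / Real.log (1 + (k : ℝ) * r)⌉ : ℝ)) := by
  obtain ⟨hr0, -⟩ := hr
  obtain ⟨hB1, hBr⟩ := hB
  set m := ⌈Real.log B / Real.log (1 + (k : ℝ) * r)⌉₊
  have hm : (m : ℝ) = ⌈Real.log B / Real.log (1 + (k : ℝ) * r)⌉ := natCast_ceil_eq_intCast_ceil
    (div_nonneg (Real.log_nonneg hB1) (Real.log_nonneg (by linarith)))
  have hX1 := ae_one_le_of_increment_nonneg hX0 hrec (ae_increment_nonneg hYad hdom)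
  calc ∫⁻ ω, (T ω : ℝ≥0∞) ∂P ≤ ∑' t, P {ω | (X t ω : ℝ) < B} :=
        lintegral_hittingTime_le (fun t => (hXad t).mono (𝓕.le t) le_rfl) hT
    _ ≤ ∑' t, ∑ i ∈ range m, P {ω | X t ω ∈ phase (k * r) B i} := ENNReal.tsum_le_tsum fun t =>
        measure_lt_le_sum_measure_phase hB1
          (le_pow_natCeil_log_div_log (by linarith) hB1) (hX1 t)
    _ = ∑ i ∈ range m, ∑' t, P {ω | X t ω ∈ phase (k * r) B i} :=
        Summable.tsum_finsetSum fun _ _ => ENNReal.summable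
    _ ≤ ∑ i ∈ range m, 4 :=
        sum_le_sum fun i _ => tsum_measure_phase_le_four hXad hYad hrec hdom hr0 hkr hB1 hBr i
    _ = ENNReal.ofReal (4 * (⌈Real.log B / Real.log (1 + (k : ℝ) * r)⌉ : ℝ)) := by
        rw [sum_const, card_range, nsmul_eq_mul, ← hm, ENNReal.ofReal_mul (by norm_num),
          ENNReal.ofReal_natCast, mul_comm]
        norm_num

/-- Multiplicative growth lemma: `X₀ = 1`, `X_{t+1} = X_t + Y_{t+1}`, where conditionally
on the history `𝓕 t`, the increment `Y_{t+1}` stochastically dominates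
`Bin(k, min{r·X_t, 1})`, and `k·r ≥ 0.29`.  Then for `B ∈ [1, 1/r]`, the hitting time
`T = inf{t : X_t ≥ B}` satisfies `E[T] ≤ 4·⌈log_{1+kr} B⌉`. -/
theorem stmt_4 {Ω : Type*} {mΩ : MeasurableSpace Ω} (P : Measure Ω) [IsProbabilityMeasure P]
    (k : ℕ) (hk : 1 ≤ k) (r : ℝ) (hr : r ∈ Set.Ioo (0 : ℝ) 1) (hkr : 0.29 ≤ (k : ℝ) * r)
    (𝓕 : Filtration ℕ mΩ)
    (X Y : ℕ → Ω → ℤ)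
    (hXad : ∀ t, Measurable[𝓕 t] (X t))
    (hYad : ∀ t, Measurable[𝓕 (t + 1)] (Y (t + 1)))
    (hX0 : ∀ ω, X 0 ω = 1)
    (hrec : ∀ t ω, X (t + 1) ω = X t ω + Y (t + 1) ω)
    (hdom : ∀ t (c : ℤ), ∀ᵐ ω ∂P,
      binomTail k (min (r * (X t ω : ℝ)) 1) c ≤
        (P[({ω' | c ≤ Y (t + 1) ω'}).indicator (fun _ => (1 : ℝ)) | 𝓕 t]) ω)
    (B : ℝ) (hB : B ∈ Set.Icc (1 : ℝ) r⁻¹)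
    (T : Ω → ℕ) (hT : ∀ ω, T ω = sInf {t : ℕ | B ≤ (X t ω : ℝ)}) :
    ∫⁻ ω, (T ω : ℝ≥0∞) ∂P ≤
      ENNReal.ofReal (4 * (⌈Real.log B / Real.log (1 + (k : ℝ) * r)⌉ : ℝ)) :=
  stmt_4_general P k r hr hkr 𝓕 X Y hXad hYad hX0 hrec hdom B hB T hT
end

section
/- Consider one iteration of the SPEA2 with parent population size μ on a multi-objective problem. Let S_t be the multiset of non-dominated individuals of the combined parent and offspring population, F_t the set of their distinct objective values, and for u ∈ ℝ^m let A_u = {x ∈ S_t : f(x) = u}. Then at least min{|A_u|, ⌊μ/|F_t|⌋} individuals from A_u survive into the next parent population. -/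
open Classical in
/-- The sorted (increasing) list of distances in objective space from `f x` to the other
members of the multiset `A` (one copy of `x` removed): its `k`-th entry is `σ_k(x)`. -/
noncomputable def sigmaList {Ωs : Type*} {m : ℕ} (f : Ωs → EuclideanSpace ℝ (Fin m))
    (A : Multiset Ωs) (x : Ωs) : List ℝ :=
  ((A.erase x).map fun y => ‖f x - f y‖).sort (· ≤ ·)

/-- `x ≤_d y` w.r.t. the multiset `A`: the vector `(σ_k(x))_k` is lexicographically at
most `(σ_k(y))_k`. -/
noncomputable def sigmaLE {Ωs : Type*} {m : ℕ} (f : Ωs → EuclideanSpace ℝ (Fin m))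
    (A : Multiset Ωs) (x y : Ωs) : Prop :=
  sigmaList f A x = sigmaList f A y ∨
    List.Lex (· < ·) (sigmaList f A x) (sigmaList f A y)

open Classical in
/-- One elimination step of SPEA2: remove from `S` an element minimal w.r.t. `≤_d`. -/
noncomputable def eliminateStep {Ωs : Type*} {m : ℕ} (f : Ωs → EuclideanSpace ℝ (Fin m))
    (S S' : Multiset Ωs) : Prop :=
  ∃ x ∈ S, (∀ y ∈ S, sigmaLE f S x y) ∧ S' = S.erase x

/-!
Individuals with equal objective values are at distance `0`, so `sigmaList f S x` has exactly
`|A_{f x}| - 1` zeros; among sorted nonnegative lists of equal length, more zeros means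
lexicographically smaller. Hence an eliminated (`≤_d`-minimal) individual lies in a largest class.
If it lay in the class of `u` while that class had at most `q ≤ ⌊μ/|F|⌋` members, every class
would have at most `q` members and `|S| ≤ |F| q ≤ μ`, so truncation would already have stopped.
Thus the class of `u` never drops below `min{|A_u|, ⌊μ/|F|⌋}`.
-/

open Classical

theorem List.lex_lt_of_count_lt {α : Type*} [LinearOrder α] {b : α} {l₁ l₂ : List α}
    (h₁ : l₁.Pairwise (· ≤ ·)) (h₂ : l₂.Pairwise (· ≤ ·))
    (hb₁ : ∀ a ∈ l₁, b ≤ a) (hb₂ : ∀ a ∈ l₂, b ≤ a) (hlen : l₁.length = l₂.length)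
    (hcount : l₁.count b < l₂.count b) : List.Lex (· < ·) l₂ l₁ := by
  induction l₁ generalizing l₂ with
  | nil => cases l₂ <;> simp_all
  | cons a t₁ ih =>
    obtain _ | ⟨c, t₂⟩ := l₂
    · simp at hlen
    have hc : c = b := by
      have hb : b ∈ c :: t₂ := List.count_pos_iff.mp (by omega)
      rcases List.mem_cons.mp hb with rfl | hbt
      · rfl
      · exact le_antisymm ((List.pairwise_cons.mp h₂).1 b hbt) (hb₂ c List.mem_cons_self)
    subst hc
    rcases (hb₁ a List.mem_cons_self).lt_or_eq with hlt | rfl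
    · exact List.Lex.rel hlt
    · refine List.Lex.cons (ih (List.pairwise_cons.mp h₁).2 (List.pairwise_cons.mp h₂).2
        (fun a ha => hb₁ a (List.mem_cons_of_mem _ ha))
        (fun a ha => hb₂ a (List.mem_cons_of_mem _ ha))
        (by simpa using hlen) ?_)
      simpa using hcount

theorem Multiset.countP_eq_countP_erase_add {α : Type*} [DecidableEq α] (p : α → Prop)
    [DecidablePred p] {A : Multiset α} {x : α} (hx : x ∈ A) :
    A.countP p = (A.erase x).countP p + if p x then 1 else 0 := by
  conv_lhs => rw [← Multiset.cons_erase hx]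
  exact Multiset.countP_cons ..

theorem Multiset.card_le_card_toFinset_map_mul {α β : Type*} [DecidableEq β] (f : α → β)
    (A : Multiset α) (n : ℕ) (h : ∀ x ∈ A, A.countP (fun z => f z = f x) ≤ n) :
    card A ≤ (A.map f).toFinset.card * n := by
  calc card A = ∑ v ∈ (A.map f).toFinset, (A.map f).count v := by
        rw [Multiset.toFinset_sum_count_eq, Multiset.card_map]
    _ ≤ ∑ _v ∈ (A.map f).toFinset, n := by
        refine Finset.sum_le_sum fun v hv => ?_
        obtain ⟨x, hx, rfl⟩ := Multiset.mem_map.mp (Multiset.mem_toFinset.mp hv)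
        rw [Multiset.count_map, ← Multiset.countP_eq_card_filter]
        simpa only [eq_comm] using h x hx
    _ = (A.map f).toFinset.card * n := by rw [Finset.sum_const, smul_eq_mul]

section sigma

variable {Ωs : Type*} {m : ℕ} (f : Ωs → EuclideanSpace ℝ (Fin m)) (A : Multiset Ωs) {x : Ωs}

theorem sigmaList_pairwise (x : Ωs) : (sigmaList f A x).Pairwise (· ≤ ·) :=
  Multiset.pairwise_sort ..

theorem sigmaList_nonneg (x : Ωs) : ∀ a ∈ sigmaList f A x, 0 ≤ a := by
  intro a ha
  obtain ⟨y, -, rfl⟩ := Multiset.mem_map.mp ((Multiset.mem_sort _).mp ha)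
  exact norm_nonneg _

theorem sigmaList_length (hx : x ∈ A) : (sigmaList f A x).length = Multiset.card A - 1 := by
  rw [sigmaList, Multiset.length_sort, Multiset.card_map, Multiset.card_erase_of_mem hx]
  rfl

theorem sigmaList_count_zero (hx : x ∈ A) :
    (sigmaList f A x).count 0 = A.countP (fun z => f z = f x) - 1 := by
  rw [← Multiset.coe_count, sigmaList, Multiset.sort_eq, Multiset.count_map,
    ← Multiset.countP_eq_card_filter, Multiset.countP_eq_countP_erase_add (fun z => f z = f x) hx,
    if_pos rfl, Nat.add_sub_cancel]
  refine Multiset.countP_congr rfl fun z _ => ?_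
  rw [eq_comm (a := (0 : ℝ)), norm_eq_zero, sub_eq_zero]
  exact propext eq_comm

theorem countP_le_of_sigmaLE {x y : Ωs} (hx : x ∈ A) (hy : y ∈ A) (hxy : sigmaLE f A x y) :
    A.countP (fun z => f z = f y) ≤ A.countP (fun z => f z = f x) := by
  by_contra! hlt
  have hcount : (sigmaList f A x).count 0 < (sigmaList f A y).count 0 := by
    have : 0 < A.countP (fun z => f z = f x) := Multiset.countP_pos.mpr ⟨x, hx, rfl⟩
    rw [sigmaList_count_zero f A hx, sigmaList_count_zero f A hy]
    omega
  have hyx : List.Lex (· < ·) (sigmaList f A y) (sigmaList f A x) :=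
    List.lex_lt_of_count_lt (sigmaList_pairwise f A x) (sigmaList_pairwise f A y)
      (sigmaList_nonneg f A x) (sigmaList_nonneg f A y)
      (by rw [sigmaList_length f A hx, sigmaList_length f A hy]) hcount
  rcases hxy with heq | hxy
  · rw [heq] at hcount
    exact hcount.false
  · exact (List.Lex.asymm (· < ·)).asymm _ _ hxy hyx

end sigma

namespace eliminateStep

variable {Ωs : Type*} {m : ℕ} {f : Ωs → EuclideanSpace ℝ (Fin m)} {S S' : Multiset Ωs}

theorem le (h : eliminateStep f S S') : S' ≤ S := by
  obtain ⟨x, -, -, rfl⟩ := h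
  exact Multiset.erase_le x S

theorem card_add_one (h : eliminateStep f S S') : Multiset.card S' + 1 = Multiset.card S := by
  obtain ⟨x, hx, -, rfl⟩ := h
  exact Multiset.card_erase_add_one hx

theorem le_countP (h : eliminateStep f S S') {u : EuclideanSpace ℝ (Fin m)} {q : ℕ}
    (hcard : (S.map f).toFinset.card * q < Multiset.card S)
    (hq : q ≤ S.countP fun x => f x = u) : q ≤ S'.countP fun x => f x = u := by
  obtain ⟨x, hx, hmin, rfl⟩ := h
  rw [Multiset.countP_eq_countP_erase_add _ hx] at hq
  split_ifs at hq with hxu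
  · suffices q < (S.countP fun x => f x = u) by
      rw [Multiset.countP_eq_countP_erase_add _ hx, if_pos hxu] at this
      omega
    by_contra! hle
    refine hcard.not_ge (Multiset.card_le_card_toFinset_map_mul f S q fun y hy => ?_)
    calc S.countP (fun z => f z = f y) ≤ S.countP (fun z => f z = f x) :=
          countP_le_of_sigmaLE f S hx hy (hmin y hy)
      _ = S.countP (fun z => f z = u) := by rw [hxu]
      _ ≤ q := hle
  · simpa using hq

end eliminateStep

section chain

variable {Ωs : Type*} {m : ℕ} {f : Ωs → EuclideanSpace ℝ (Fin m)} {S : ℕ → Multiset Ωs}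
  {n : ℕ}

theorem le_and_card_of_eliminateStep_chain (hstep : ∀ i < n, eliminateStep f (S i) (S (i + 1)))
    {i : ℕ} (hi : i ≤ n) : S i ≤ S 0 ∧ Multiset.card (S i) + i = Multiset.card (S 0) := by
  induction i with
  | zero => simp
  | succ i ih =>
    obtain ⟨hle, hcard⟩ := ih (by omega)
    have hi := hstep i (by omega)
    exact ⟨hi.le.trans hle, by have := hi.card_add_one; omega⟩

theorem le_countP_of_eliminateStep_chain (hstep : ∀ i < n, eliminateStep f (S i) (S (i + 1)))
    {u : EuclideanSpace ℝ (Fin m)} {q : ℕ}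
    (hcard : ((S 0).map f).toFinset.card * q + n ≤ Multiset.card (S 0))
    (hq : q ≤ (S 0).countP fun x => f x = u) : q ≤ (S n).countP fun x => f x = u := by
  suffices ∀ i ≤ n, q ≤ (S i).countP fun x => f x = u from this n le_rfl
  intro i hi
  induction i with
  | zero => exact hq
  | succ i ih =>
    obtain ⟨hle, hcardi⟩ := le_and_card_of_eliminateStep_chain hstep (i := i) (by omega)
    refine (hstep i (by omega)).le_countP ?_ (ih (by omega))
    have hclasses : ((S i).map f).toFinset.card ≤ ((S 0).map f).toFinset.card :=
      Finset.card_le_card <| Multiset.toFinset_subset.mpr <|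
        Multiset.map_subset_map (Multiset.subset_of_le hle)
    calc ((S i).map f).toFinset.card * q ≤ ((S 0).map f).toFinset.card * q :=
          Nat.mul_le_mul_right q hclasses
      _ < Multiset.card (S i) := by omega

end chain

theorem stmt_7_general {Ωs : Type*} {m : ℕ} (f : Ωs → EuclideanSpace ℝ (Fin m))
    (μ : ℕ) (S : ℕ → Multiset Ωs) (hμcard : μ < (S 0).card)
    (hstep : ∀ i < (S 0).card - μ, eliminateStep f (S i) (S (i + 1)))
    (u : EuclideanSpace ℝ (Fin m)) :
    min ((S 0).countP fun x => f x = u) (μ / ((S 0).map f).toFinset.card) ≤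
      (S ((S 0).card - μ)).countP fun x => f x = u := by
  refine le_countP_of_eliminateStep_chain hstep ?_ (min_le_left _ _)
  have : ((S 0).map f).toFinset.card * min ((S 0).countP fun x => f x = u)
      (μ / ((S 0).map f).toFinset.card) ≤ μ :=
    (Nat.mul_le_mul_left _ (min_le_right _ _)).trans (Nat.mul_div_le μ _)
  omega

open Classical in
/-- SPEA2 survival guarantee: let `S 0` be the multiset of non-dominated individuals of the
combined population, `F` the number of distinct objective values occurring in `S 0`, and
truncate `S 0` down to size `μ` by repeatedly eliminating a `≤_d`-minimal individual.
Then for every objective value `u`, at least `min{|A_u|, ⌊μ/|F|⌋}` individuals with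
objective value `u` survive. -/
theorem stmt_7 {Ωs : Type*} {m : ℕ} (f : Ωs → EuclideanSpace ℝ (Fin m))
    (μ : ℕ) (hμ : 1 ≤ μ) (S : ℕ → Multiset Ωs) (hμcard : μ < (S 0).card)
    (hstep : ∀ i < (S 0).card - μ, eliminateStep f (S i) (S (i + 1)))
    (u : EuclideanSpace ℝ (Fin m)) :
    min ((S 0).countP fun x => f x = u) (μ / ((S 0).map f).toFinset.card) ≤
      (S ((S 0).card - μ)).countP fun x => f x = u :=
  stmt_7_general f μ S hμcard hstep u
end

section
/- For the OneJumpZeroJump benchmark with gap size k ∈ [2, ⌊n/2⌋], the Pareto set is exactly {x ∈ {0,1}^n : |x|₁ ∈ [k, n−k] ∪ {0, n}} and the Pareto front is {(i, n+2k−i) : i ∈ [2k, n] ∪ {k, n+k}}. -/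
/-- Number of one-bits of a bit string. -/
def onesCount {n : ℕ} (x : Fin n → Bool) : ℕ := (Finset.univ.filter fun i => x i = true).card

/-- First objective of OJZJ (based on the number of ones). -/
def ojzjF1 (n k : ℕ) (x : Fin n → Bool) : ℕ :=
  if onesCount x ≤ n - k ∨ onesCount x = n then k + onesCount x else n - onesCount x

/-- Second objective of OJZJ (based on the number of zeros). -/
def ojzjF0 (n k : ℕ) (x : Fin n → Bool) : ℕ :=
  if n - onesCount x ≤ n - k ∨ n - onesCount x = n then k + (n - onesCount x)
  else n - (n - onesCount x)

/-- The objective vector of OJZJ_k. -/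
def ojzj (n k : ℕ) (x : Fin n → Bool) : ℕ × ℕ := (ojzjF1 n k x, ojzjF0 n k x)

/-- `y` strictly dominates `x` (maximization, componentwise). -/
def ojzjStrictDom (n k : ℕ) (y x : Fin n → Bool) : Prop :=
  ojzjF1 n k x ≤ ojzjF1 n k y ∧ ojzjF0 n k x ≤ ojzjF0 n k y ∧ ojzj n k y ≠ ojzj n k x

/-- `x` is Pareto-optimal for OJZJ_k. -/
def ojzjParetoOptimal (n k : ℕ) (x : Fin n → Bool) : Prop :=
  ¬ ∃ y : Fin n → Bool, ojzjStrictDom n k y x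

lemma onesCount_le {n : ℕ} (x : Fin n → Bool) : onesCount x ≤ n := by
  classical
  calc onesCount x ≤ Finset.univ.card := Finset.card_filter_le _ _
    _ = n := by simp

lemma exists_onesCount (n m : ℕ) (h : m ≤ n) : ∃ x : Fin n → Bool, onesCount x = m := by
  classical
  refine ⟨fun i => decide (i.val < m), ?_⟩
  unfold onesCount
  simp only [decide_eq_true_eq]
  have himg : (Finset.filter (fun i : Fin n => i.val < m) Finset.univ).image Fin.val
      = Finset.range m := by
    ext a
    simp only [Finset.mem_image, Finset.mem_filter, Finset.mem_univ, true_and, Finset.mem_range]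
    constructor
    · rintro ⟨i, hi, rfl⟩; exact hi
    · intro ha; exact ⟨⟨a, lt_of_lt_of_le ha h⟩, ha, rfl⟩
  have := Finset.card_image_of_injective
    (Finset.filter (fun i : Fin n => i.val < m) Finset.univ) (Fin.val_injective)
  rw [himg, Finset.card_range] at this
  omega

lemma pareto_iff (n k : ℕ) (hk2 : 2 ≤ k) (hkn : k ≤ n / 2) (x : Fin n → Bool) :
    ojzjParetoOptimal n k x ↔
      ((k ≤ onesCount x ∧ onesCount x ≤ n - k) ∨ onesCount x = 0 ∨ onesCount x = n) := by
  have h2k : 2 * k ≤ n := by omega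
  have hm : onesCount x ≤ n := onesCount_le x
  constructor
  · intro hpar
    by_contra hc
    rcases (show (0 < onesCount x ∧ onesCount x < k) ∨
        (n - k < onesCount x ∧ onesCount x < n) by omega) with ⟨h1, h2⟩ | ⟨h1, h2⟩
    · obtain ⟨y, hy⟩ := exists_onesCount n k (by omega)
      refine hpar ⟨y, ?_, ?_, ?_⟩ <;>
        simp only [ojzjStrictDom, ojzj, ojzjF1, ojzjF0, ne_eq, Prod.mk.injEq, hy, true_and, and_true, or_true, if_true] <;>
        split_ifs <;> omega
    · obtain ⟨y, hy⟩ := exists_onesCount n (n - k) (by omega)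
      refine hpar ⟨y, ?_, ?_, ?_⟩ <;>
        simp only [ojzjStrictDom, ojzj, ojzjF1, ojzjF0, ne_eq, Prod.mk.injEq, hy, true_and, and_true, or_true, if_true] <;>
        split_ifs <;> omega
  · rintro hx ⟨y, hd⟩
    have hm' : onesCount y ≤ n := onesCount_le y
    simp only [ojzjStrictDom, ojzj, ojzjF1, ojzjF0, ne_eq, Prod.mk.injEq, not_and, true_and, and_true, or_true, if_true] at hd
    split_ifs at hd <;> omega

/-- For OJZJ with gap size `k ∈ [2, ⌊n/2⌋]`, the Pareto set is
`{x : |x|₁ ∈ [k, n−k] ∪ {0, n}}` and the Pareto front is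
`{(i, n+2k−i) : i ∈ [2k, n] ∪ {k, n+k}}`. -/
theorem stmt_9 (n k : ℕ) (hk2 : 2 ≤ k) (hkn : k ≤ n / 2) :
    ({x : Fin n → Bool | ojzjParetoOptimal n k x} =
      {x : Fin n → Bool |
        (k ≤ onesCount x ∧ onesCount x ≤ n - k) ∨ onesCount x = 0 ∨ onesCount x = n}) ∧
    ({p : ℕ × ℕ | ∃ x : Fin n → Bool, ojzjParetoOptimal n k x ∧ p = ojzj n k x} =
      {p : ℕ × ℕ | ∃ i : ℕ,
        ((2 * k ≤ i ∧ i ≤ n) ∨ i = k ∨ i = n + k) ∧ p = (i, n + 2 * k - i)}) := by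
  have h2k : 2 * k ≤ n := by omega
  constructor
  · ext x
    simp only [Set.mem_setOf_eq]
    exact pareto_iff n k hk2 hkn x
  · ext p
    simp only [Set.mem_setOf_eq]
    constructor
    · rintro ⟨x, hopt, rfl⟩
      have hx := (pareto_iff n k hk2 hkn x).mp hopt
      have hm : onesCount x ≤ n := onesCount_le x
      refine ⟨ojzjF1 n k x, ?_, ?_⟩
      · simp only [ojzjF1]; split_ifs <;> omega
      · simp only [ojzj, ojzjF1, ojzjF0, Prod.mk.injEq, true_and, and_true, or_true, if_true]
        split_ifs <;> omega
    · rintro ⟨i, hi, rfl⟩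
      rcases hi with ⟨h1, h2⟩ | hik | hik
      · obtain ⟨x, hx⟩ := exists_onesCount n (i - k) (by omega)
        refine ⟨x, (pareto_iff n k hk2 hkn x).mpr (Or.inl ⟨by omega, by omega⟩), ?_⟩
        simp only [ojzj, ojzjF1, ojzjF0, Prod.mk.injEq, hx, true_and, and_true, or_true, if_true]
        split_ifs <;> omega
      · obtain ⟨x, hx⟩ := exists_onesCount n 0 (by omega)
        refine ⟨x, (pareto_iff n k hk2 hkn x).mpr (Or.inr (Or.inl hx)), ?_⟩
        simp only [ojzj, ojzjF1, ojzjF0, Prod.mk.injEq, hx, true_and, and_true, or_true, if_true]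
        split_ifs <;> omega
      · obtain ⟨x, hx⟩ := exists_onesCount n n (by omega)
        refine ⟨x, (pareto_iff n k hk2 hkn x).mpr (Or.inr (Or.inr hx)), ?_⟩
        simp only [ojzj, ojzjF1, ojzjF0, Prod.mk.injEq, hx, true_and, and_true, or_true, if_true]
        split_ifs <;> omega
end

section
/- For the OneJumpZeroJump benchmark with gap size k ∈ [2, ⌊n/2⌋], the largest set of pairwise incomparable solutions (with pairwise distinct objective values) has cardinality at most n − 2k + 3. -/
/-- `y` weakly dominates `x` (maximization, componentwise). -/
def ojzjWeakDom (n k : ℕ) (y x : Fin n → Bool) : Prop :=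
  ojzjF1 n k x ≤ ojzjF1 n k y ∧ ojzjF0 n k x ≤ ojzjF0 n k y

/-- First objective as a function of the number of ones. -/
def F1' (n k m : ℕ) : ℕ := if m ≤ n - k ∨ m = n then k + m else n - m

/-- Second objective as a function of the number of ones. -/
def F0' (n k m : ℕ) : ℕ :=
  if n - m ≤ n - k ∨ n - m = n then k + (n - m) else n - (n - m)

lemma dom_key (n k m m' : ℕ) (hk2 : 2 ≤ k) (hn : 2 * k ≤ n) (hm : m ≤ n) (hm' : m' ≤ n)
    (h : (0 < m ∧ m < m' ∧ m' < k) ∨ (0 < m ∧ m < k ∧ k ≤ m' ∧ m' ≤ n - k)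
      ∨ (0 < m ∧ m < k ∧ m' = n)
      ∨ (n - k < m' ∧ m' < m ∧ m < n) ∨ (n - k < m ∧ m < n ∧ k ≤ m' ∧ m' ≤ n - k)
      ∨ (n - k < m ∧ m < n ∧ m' = 0)) :
    F1' n k m ≤ F1' n k m' ∧ F0' n k m ≤ F0' n k m' := by
  unfold F1' F0'
  constructor <;> split_ifs <;> omega

/-- For OJZJ with gap size `k ∈ [2, ⌊n/2⌋]`, any set of pairwise incomparable solutions
(pairwise distinct objective values, no member weakly dominating another) has cardinality
at most `n − 2k + 3`. -/
theorem stmt_10 (n k : ℕ) (hk2 : 2 ≤ k) (hkn : k ≤ n / 2)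
    (A : Finset (Fin n → Bool))
    (hA : ∀ x ∈ A, ∀ y ∈ A, x ≠ y →
      ojzj n k x ≠ ojzj n k y ∧ ¬ojzjWeakDom n k x y ∧ ¬ojzjWeakDom n k y x) :
    A.card ≤ n - 2 * k + 3 := by
  classical
  have hn2k : 2 * k ≤ n := by omega
  set M := A.image (fun x => onesCount x) with hMdef
  have hinj : Set.InjOn (fun x : Fin n → Bool => onesCount x) ↑A := by
    intro x hx y hy hxy
    by_contra hne
    exact (hA x hx y hy hne).1 (by simp only [ojzj, ojzjF1, ojzjF0, hxy])
  have hcard : A.card = M.card := (Finset.card_image_of_injOn hinj).symm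
  rw [hcard]
  have hmle : ∀ m ∈ M, m ≤ n := by
    intro m hm
    rw [hMdef, Finset.mem_image] at hm
    obtain ⟨x, _, rfl⟩ := hm
    calc onesCount x ≤ Finset.univ.card :=
          Finset.card_le_card (Finset.filter_subset _ _)
      _ = n := by simp
  have hInc : ∀ m ∈ M, ∀ m' ∈ M, m ≠ m' →
      ¬(F1' n k m ≤ F1' n k m' ∧ F0' n k m ≤ F0' n k m') := by
    intro m hm m' hm' hne hdom
    rw [hMdef, Finset.mem_image] at hm hm'
    obtain ⟨x, hx, rfl⟩ := hm
    obtain ⟨y, hy, rfl⟩ := hm'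
    have hxy : x ≠ y := by rintro rfl; exact hne rfl
    exact (hA x hx y hy hxy).2.2 ⟨hdom.1, hdom.2⟩
  by_cases hL : ∃ a ∈ M, 0 < a ∧ a < k
  · obtain ⟨a, haM, ha0, hak⟩ := hL
    have han : a ≤ n := hmle a haM
    -- no element of [k, n-k] in M
    have hnoCm : ∀ m ∈ M, ¬(k ≤ m ∧ m ≤ n - k) := by
      intro m hm ⟨h1, h2⟩
      exact hInc a haM m hm (by omega)
        (dom_key n k a m hk2 hn2k han (hmle m hm) (Or.inr (Or.inl ⟨ha0, hak, h1, h2⟩)))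
    -- n ∉ M
    have hnoN : n ∉ M := by
      intro hn'
      exact hInc a haM n hn' (by omega)
        (dom_key n k a n hk2 hn2k han le_rfl (Or.inr (Or.inr (Or.inl ⟨ha0, hak, rfl⟩))))
    -- uniqueness within (0,k)
    have hCluniq : ∀ m ∈ M, 0 < m → m < k → m = a := by
      intro m hm h0 hk'
      by_contra hne
      rcases Nat.lt_or_ge m a with h | h
      · exact hInc m hm a haM hne
          (dom_key n k m a hk2 hn2k (hmle m hm) han (Or.inl ⟨h0, h, hak⟩))
      · exact hInc a haM m hm (by omega)
          (dom_key n k a m hk2 hn2k han (hmle m hm) (Or.inl ⟨ha0, by omega, hk'⟩))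
    by_cases hR : ∃ b ∈ M, n - k < b ∧ b < n
    · obtain ⟨b, hbM, hb1, hb2⟩ := hR
      have hbn : b ≤ n := hmle b hbM
      have hno0 : (0 : ℕ) ∉ M := by
        intro h0
        exact hInc b hbM 0 h0 (by omega)
          (dom_key n k b 0 hk2 hn2k hbn (by omega)
            (Or.inr (Or.inr (Or.inr (Or.inr (Or.inr ⟨hb1, hb2, rfl⟩))))))
      have hCruniq : ∀ m ∈ M, n - k < m → m < n → m = b := by
        intro m hm h1 h2
        by_contra hne
        rcases Nat.lt_or_ge b m with h | h
        · exact hInc m hm b hbM hne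
            (dom_key n k m b hk2 hn2k (hmle m hm) hbn
              (Or.inr (Or.inr (Or.inr (Or.inl ⟨hb1, h, h2⟩)))))
        · exact hInc b hbM m hm (by omega)
            (dom_key n k b m hk2 hn2k hbn (hmle m hm)
              (Or.inr (Or.inr (Or.inr (Or.inl ⟨h1, by omega, hb2⟩)))))
      have hsub : M ⊆ {a, b} := by
        intro m hm
        have hmn := hmle m hm
        have h0 : m ≠ 0 := by rintro rfl; exact hno0 hm
        have hCm := hnoCm m hm
        have hN : m ≠ n := by rintro rfl; exact hnoN hm
        simp only [Finset.mem_insert, Finset.mem_singleton]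
        rcases Nat.lt_or_ge m k with h | h
        · exact Or.inl (hCluniq m hm (by omega) h)
        · exact Or.inr (hCruniq m hm (by omega) (by omega))
      calc M.card ≤ ({a, b} : Finset ℕ).card := Finset.card_le_card hsub
        _ ≤ 2 := Finset.card_le_two
        _ ≤ n - 2 * k + 3 := by omega
    · have hsub : M ⊆ {0, a} := by
        intro m hm
        have hmn := hmle m hm
        have hCm := hnoCm m hm
        have hN : m ≠ n := by rintro rfl; exact hnoN hm
        have hCr : ¬(n - k < m ∧ m < n) := fun h => hR ⟨m, hm, h⟩
        simp only [Finset.mem_insert, Finset.mem_singleton]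
        rcases Nat.eq_zero_or_pos m with h | h
        · exact Or.inl h
        · exact Or.inr (hCluniq m hm h (by omega))
      calc M.card ≤ ({0, a} : Finset ℕ).card := Finset.card_le_card hsub
        _ ≤ 2 := Finset.card_le_two
        _ ≤ n - 2 * k + 3 := by omega
  · by_cases hR : ∃ b ∈ M, n - k < b ∧ b < n
    · obtain ⟨b, hbM, hb1, hb2⟩ := hR
      have hbn : b ≤ n := hmle b hbM
      have hno0 : (0 : ℕ) ∉ M := by
        intro h0
        exact hInc b hbM 0 h0 (by omega)
          (dom_key n k b 0 hk2 hn2k hbn (by omega)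
            (Or.inr (Or.inr (Or.inr (Or.inr (Or.inr ⟨hb1, hb2, rfl⟩))))))
      have hnoCm : ∀ m ∈ M, ¬(k ≤ m ∧ m ≤ n - k) := by
        intro m hm ⟨h1, h2⟩
        exact hInc b hbM m hm (by omega)
          (dom_key n k b m hk2 hn2k hbn (hmle m hm)
            (Or.inr (Or.inr (Or.inr (Or.inr (Or.inl ⟨hb1, hb2, h1, h2⟩))))))
      have hCruniq : ∀ m ∈ M, n - k < m → m < n → m = b := by
        intro m hm h1 h2
        by_contra hne
        rcases Nat.lt_or_ge b m with h | h
        · exact hInc m hm b hbM hne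
            (dom_key n k m b hk2 hn2k (hmle m hm) hbn
              (Or.inr (Or.inr (Or.inr (Or.inl ⟨hb1, h, h2⟩)))))
        · exact hInc b hbM m hm (by omega)
            (dom_key n k b m hk2 hn2k hbn (hmle m hm)
              (Or.inr (Or.inr (Or.inr (Or.inl ⟨h1, by omega, hb2⟩)))))
      have hsub : M ⊆ {b, n} := by
        intro m hm
        have hmn := hmle m hm
        have h0 : m ≠ 0 := by rintro rfl; exact hno0 hm
        have hCm := hnoCm m hm
        have hCl : ¬(0 < m ∧ m < k) := fun h => hL ⟨m, hm, h⟩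
        simp only [Finset.mem_insert, Finset.mem_singleton]
        rcases Nat.lt_or_ge m n with h | h
        · exact Or.inl (hCruniq m hm (by omega) h)
        · exact Or.inr (by omega)
      calc M.card ≤ ({b, n} : Finset ℕ).card := Finset.card_le_card hsub
        _ ≤ 2 := Finset.card_le_two
        _ ≤ n - 2 * k + 3 := by omega
    · have hsub : M ⊆ insert 0 (insert n (Finset.Icc k (n - k))) := by
        intro m hm
        have hmn := hmle m hm
        have hCl : ¬(0 < m ∧ m < k) := fun h => hL ⟨m, hm, h⟩
        have hCr : ¬(n - k < m ∧ m < n) := fun h => hR ⟨m, hm, h⟩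
        simp only [Finset.mem_insert, Finset.mem_Icc]
        omega
      have h1 := Finset.card_le_card hsub
      have h2 := Finset.card_insert_le 0 (insert n (Finset.Icc k (n - k)))
      have h3 := Finset.card_insert_le n (Finset.Icc k (n - k))
      have h4 : (Finset.Icc k (n - k)).card = n - k + 1 - k := Nat.card_Icc _ _
      omega
end

section
/- For the LeadingOnesTrailingZeros benchmark, the Pareto set is exactly {1^k 0^{n−k} : k ∈ [0, n]}, the Pareto front is {(k, n−k) : k ∈ [0, n]}, and the map from Pareto set to Pareto front is a bijection. -/
/-- Length of the longest prefix of ones of a bit string. -/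
def leadingOnes {n : ℕ} (x : Fin n → Bool) : ℕ :=
  (Finset.univ.filter fun i : Fin n => ∀ j : Fin n, j ≤ i → x j = true).card

/-- Length of the longest suffix of zeros of a bit string. -/
def trailingZeros {n : ℕ} (x : Fin n → Bool) : ℕ :=
  (Finset.univ.filter fun i : Fin n => ∀ j : Fin n, i ≤ j → x j = false).card

/-- The objective vector of LOTZ. -/
def lotz {n : ℕ} (x : Fin n → Bool) : ℕ × ℕ := (leadingOnes x, trailingZeros x)

/-- `y` strictly dominates `x` for LOTZ (maximization, componentwise). -/
def lotzStrictDom {n : ℕ} (y x : Fin n → Bool) : Prop :=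
  leadingOnes x ≤ leadingOnes y ∧ trailingZeros x ≤ trailingZeros y ∧ lotz y ≠ lotz x

/-- `x` is Pareto-optimal for LOTZ. -/
def lotzParetoOptimal {n : ℕ} (x : Fin n → Bool) : Prop :=
  ¬ ∃ y : Fin n → Bool, lotzStrictDom y x

/-!
A position in the prefix of ones is not in the suffix of zeros, so
`leadingOnes x + trailingZeros x ≤ n`, while `1^k 0^(n-k)` attains `(k, n - k)`. A string with
`leadingOnes x = a` and a smaller sum is therefore strictly dominated by `1^a 0^(n-a)`, and a
string with sum `n` is dominated by nothing. So the Pareto-optimal strings are those with sum `n`,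
which are exactly the strings `1^k 0^(n-k)`, and such a string is determined by `leadingOnes`.
-/

open Finset

namespace Fin

lemma lt_card_filter_iff_of_antitone {n : ℕ} {P : Fin n → Prop} [DecidablePred P]
    (hP : Antitone P) (i : Fin n) : (i : ℕ) < #(univ.filter P) ↔ P i := by
  constructor
  · intro hi
    by_contra hPi
    have hsub : univ.filter P ⊆ Iio i := fun j hj => by
      simp only [mem_filter, mem_univ, true_and] at hj
      exact mem_Iio.2 (lt_of_not_ge fun hij => hPi (hP hij hj))
    have := card_le_card hsub
    rw [card_Iio] at this
    omega
  · intro hPi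
    have hsub : Iic i ⊆ univ.filter P := fun j hj =>
      mem_filter.2 ⟨mem_univ j, hP (mem_Iic.1 hj) hPi⟩
    have := card_le_card hsub
    rw [card_Iic] at this
    omega

lemma le_add_card_filter_iff_of_monotone {n : ℕ} {P : Fin n → Prop} [DecidablePred P]
    (hP : Monotone P) (i : Fin n) : n ≤ (i : ℕ) + #(univ.filter P) ↔ P i := by
  have hnot : Antitone fun j => ¬ P j := fun _ _ hjk hPk hPj => hPk (hP hjk hPj)
  have hsplit := card_filter_add_card_filter_not (s := (univ : Finset (Fin n))) P
  rw [card_univ, Fintype.card_fin] at hsplit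
  rw [← not_iff_not, ← lt_card_filter_iff_of_antitone hnot i]
  omega

end Fin

variable {n : ℕ}

lemma lt_leadingOnes_iff (x : Fin n → Bool) (i : Fin n) :
    (i : ℕ) < leadingOnes x ↔ ∀ j, j ≤ i → x j = true :=
  Fin.lt_card_filter_iff_of_antitone (fun _ _ hab h j hj => h j (hj.trans hab)) i

lemma le_add_trailingZeros_iff (x : Fin n → Bool) (i : Fin n) :
    n ≤ (i : ℕ) + trailingZeros x ↔ ∀ j, i ≤ j → x j = false :=
  Fin.le_add_card_filter_iff_of_monotone (fun _ _ hab h j hj => h j (hab.trans hj)) i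

lemma leadingOnes_add_trailingZeros_le (x : Fin n → Bool) :
    leadingOnes x + trailingZeros x ≤ n := by
  have hdisj : Disjoint (univ.filter fun i : Fin n => ∀ j, j ≤ i → x j = true)
      (univ.filter fun i : Fin n => ∀ j, i ≤ j → x j = false) := by
    rw [disjoint_filter]
    intro i _ hone hzero
    simpa [hone i le_rfl] using hzero i le_rfl
  calc leadingOnes x + trailingZeros x = #(_ ∪ _) := (card_union_of_disjoint hdisj).symm
    _ ≤ #(univ : Finset (Fin n)) := card_le_card (subset_univ _)
    _ = n := by simp

def onesThenZeros (n k : ℕ) : Fin n → Bool := fun i => decide ((i : ℕ) < k)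

lemma lotz_onesThenZeros {k : ℕ} (hk : k ≤ n) : lotz (onesThenZeros n k) = (k, n - k) := by
  have hlead : k ≤ leadingOnes (onesThenZeros n k) := by
    rcases Nat.eq_zero_or_pos k with rfl | hpos
    · exact Nat.zero_le _
    · have := (lt_leadingOnes_iff (onesThenZeros n k) ⟨k - 1, by omega⟩).2 fun j hj => by
        have : (j : ℕ) ≤ k - 1 := hj
        simp only [onesThenZeros, decide_eq_true_eq]
        omega
      change k - 1 < _ at this
      omega
  have htrail : n - k ≤ trailingZeros (onesThenZeros n k) := by
    rcases hk.eq_or_lt with rfl | hkn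
    · simp
    · have := (le_add_trailingZeros_iff (onesThenZeros n k) ⟨k, hkn⟩).2 fun j hj => by
        have : k ≤ (j : ℕ) := hj
        simpa [onesThenZeros] using this
      change n ≤ k + _ at this
      omega
  have := leadingOnes_add_trailingZeros_le (onesThenZeros n k)
  simp only [lotz, Prod.mk.injEq]
  omega

lemma leadingOnes_le (x : Fin n → Bool) : leadingOnes x ≤ n :=
  (Nat.le_add_right _ _).trans (leadingOnes_add_trailingZeros_le x)

lemma lotzParetoOptimal_iff_add_eq (x : Fin n → Bool) :
    lotzParetoOptimal x ↔ leadingOnes x + trailingZeros x = n := by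
  have hx := leadingOnes_add_trailingZeros_le x
  constructor
  · intro hopt
    by_contra hne
    obtain ⟨hlead, htrail⟩ := Prod.mk.inj (lotz_onesThenZeros (leadingOnes_le x))
    refine hopt ⟨onesThenZeros n (leadingOnes x), hlead.ge, by omega, fun heq => ?_⟩
    have := congrArg Prod.snd heq
    simp only [lotz] at this
    omega
  · rintro hsum ⟨y, hlead, htrail, hne⟩
    have hy := leadingOnes_add_trailingZeros_le y
    exact hne (Prod.ext (by simp only [lotz]; omega) (by simp only [lotz]; omega))

lemma eq_onesThenZeros_of_add_eq {x : Fin n → Bool}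
    (hsum : leadingOnes x + trailingZeros x = n) : x = onesThenZeros n (leadingOnes x) := by
  funext i
  by_cases hi : (i : ℕ) < leadingOnes x
  · simp [onesThenZeros, hi, (lt_leadingOnes_iff x i).1 hi i le_rfl]
  · simp [onesThenZeros, hi, (le_add_trailingZeros_iff x i).1 (by omega) i le_rfl]

lemma lotzParetoOptimal_iff_exists_onesThenZeros (x : Fin n → Bool) :
    lotzParetoOptimal x ↔ ∃ k ≤ n, x = onesThenZeros n k := by
  rw [lotzParetoOptimal_iff_add_eq]
  constructor
  · intro hsum
    exact ⟨leadingOnes x, by omega, eq_onesThenZeros_of_add_eq hsum⟩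
  · rintro ⟨k, hk, rfl⟩
    obtain ⟨hlead, htrail⟩ := Prod.mk.inj (lotz_onesThenZeros hk)
    omega

/-- For LOTZ, the Pareto set is `{1^k 0^{n−k} : k ∈ [0, n]}`, the Pareto front is
`{(k, n−k) : k ∈ [0, n]}`, and `lotz` is a bijection between them (injective on the
Pareto set). -/
theorem stmt_11 (n : ℕ) :
    ({x : Fin n → Bool | lotzParetoOptimal x} =
      {x : Fin n → Bool | ∃ k ≤ n, x = fun i : Fin n => decide ((i : ℕ) < k)}) ∧
    ({p : ℕ × ℕ | ∃ x : Fin n → Bool, lotzParetoOptimal x ∧ p = lotz x} =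
      {p : ℕ × ℕ | ∃ k ≤ n, p = (k, n - k)}) ∧
    (∀ x y : Fin n → Bool, lotzParetoOptimal x → lotzParetoOptimal y →
      lotz x = lotz y → x = y) := by
  refine ⟨Set.ext lotzParetoOptimal_iff_exists_onesThenZeros, ?_, ?_⟩
  · ext p
    constructor
    · rintro ⟨x, hx, rfl⟩
      obtain ⟨k, hk, rfl⟩ := (lotzParetoOptimal_iff_exists_onesThenZeros x).1 hx
      exact ⟨k, hk, lotz_onesThenZeros hk⟩
    · rintro ⟨k, hk, rfl⟩
      exact ⟨_, (lotzParetoOptimal_iff_exists_onesThenZeros _).2 ⟨k, hk, rfl⟩,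
        (lotz_onesThenZeros hk).symm⟩
  · intro x y hx hy hxy
    obtain ⟨k, hk, rfl⟩ := (lotzParetoOptimal_iff_exists_onesThenZeros x).1 hx
    obtain ⟨l, hl, rfl⟩ := (lotzParetoOptimal_iff_exists_onesThenZeros y).1 hy
    rw [lotz_onesThenZeros hk, lotz_onesThenZeros hl, Prod.mk.injEq] at hxy
    rw [hxy.1]
end
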